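/- arXiv:0802.1036 — 2 statements merged into one kernel-verified Lean document; each statement's English description precedes it below -/
import Mathlib

section
/- Let C be a monoidal category and suppose given, for all objects V, U, V', U', an associative operation ⊛: Hom_C(V,U) × Hom_C(V',U') → Hom_C(V ⊗ V', U ⊗ U') such that (i) φ ⊛ ψ = (φ ⊗ ψ) ∘ (id_V ⊛ id_{V'}) for all φ: V → U, ψ: V' → U'; (ii) φ ⊛ ξ = φ ⊗ ξ and ξ ⊛ φ = ξ ⊗ φ whenever ξ has target the unit object 1; and (iii) I_{U,V} := id_U ⊛ id_V is invertible for all U, V. Then J_{U,V} := I_{U,V}^{-1} is a cocycle in C, i.e. satisfies the 2-cocycle equation a_{XYZ} J_{X⊗Y,Z} (J_{X,Y} ⊗ id_Z) = J_{X,Y⊗Z} (id_X ⊗ J_{Y,Z}) a_{XYZ} and the normalization J_{X,1} = id, J_{1,X} = id. -/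
/-!
Taking `φ, ψ, χ` to be identities in the associativity of `⊛` and expanding both sides with (i)
shows that `I` itself satisfies the cocycle identity
`I_{X⊗Y,Z} ≫ (I_{X,Y} ▷ Z) ≫ a = a ≫ I_{X,Y⊗Z} ≫ (X ◁ I_{Y,Z})`;
inverting both sides gives the identity for `J = I⁻¹`. Normalization is (ii) applied to `ξ = id_1`.
-/

open CategoryTheory MonoidalCategory

theorem CategoryTheory.inv_comp_inv_comp_eq_of_comp_comp_eq {C : Type*} [Category C]
    {A B D E F G : C} {f : A ⟶ B} {g : B ⟶ D} {e₁ : D ⟶ E} {e₂ : A ⟶ F} {h : F ⟶ G} {k : G ⟶ E}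
    [IsIso f] [IsIso g] [IsIso h] [IsIso k] (w : f ≫ g ≫ e₁ = e₂ ≫ h ≫ k) :
    inv g ≫ inv f ≫ e₂ = e₁ ≫ inv k ≫ inv h := by
  rw [← cancel_epi (f ≫ g), ← cancel_mono (h ≫ k)]
  simp only [Category.assoc, IsIso.hom_inv_id_assoc, IsIso.inv_hom_id_assoc, IsIso.inv_hom_id,
    Category.comp_id, w]

section StarProduct

variable {C : Type*} [Category C] [MonoidalCategory C]
  (star : ∀ {V U V' U' : C}, (V ⟶ U) → (V' ⟶ U') → (V ⊗ V' ⟶ U ⊗ U'))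

theorem star_id_right_eq_comp_whiskerRight
    (hi : ∀ {V U V' U' : C} (φ : V ⟶ U) (ψ : V' ⟶ U'), star φ ψ = star (𝟙 V) (𝟙 V') ≫ (φ ⊗ₘ ψ))
    {V U : C} (φ : V ⟶ U) (Z : C) : star φ (𝟙 Z) = star (𝟙 V) (𝟙 Z) ≫ φ ▷ Z := by
  rw [hi, tensorHom_id]

theorem star_id_left_eq_comp_whiskerLeft
    (hi : ∀ {V U V' U' : C} (φ : V ⟶ U) (ψ : V' ⟶ U'), star φ ψ = star (𝟙 V) (𝟙 V') ≫ (φ ⊗ₘ ψ))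
    (X : C) {V U : C} (ψ : V ⟶ U) : star (𝟙 X) ψ = star (𝟙 X) (𝟙 V) ≫ X ◁ ψ := by
  rw [hi, id_tensorHom]

theorem star_id_id_cocycle
    (hassoc : ∀ {V U V' U' V'' U'' : C} (φ : V ⟶ U) (ψ : V' ⟶ U') (χ : V'' ⟶ U''),
      star (star φ ψ) χ ≫ (α_ U U' U'').hom = (α_ V V' V'').hom ≫ star φ (star ψ χ))
    (hi : ∀ {V U V' U' : C} (φ : V ⟶ U) (ψ : V' ⟶ U'), star φ ψ = star (𝟙 V) (𝟙 V') ≫ (φ ⊗ₘ ψ))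
    (X Y Z : C) :
    star (𝟙 (X ⊗ Y)) (𝟙 Z) ≫ star (𝟙 X) (𝟙 Y) ▷ Z ≫ (α_ X Y Z).hom =
      (α_ X Y Z).hom ≫ star (𝟙 X) (𝟙 (Y ⊗ Z)) ≫ X ◁ star (𝟙 Y) (𝟙 Z) := by
  have h := hassoc (𝟙 X) (𝟙 Y) (𝟙 Z)
  rwa [star_id_right_eq_comp_whiskerRight star hi (star (𝟙 X) (𝟙 Y)),
    star_id_left_eq_comp_whiskerLeft star hi X (star (𝟙 Y) (𝟙 Z)), Category.assoc] at h

theorem star_id_id_tensorUnit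
    (hii₁ : ∀ {V U V' : C} (φ : V ⟶ U) (ξ : V' ⟶ 𝟙_ C), star φ ξ = φ ⊗ₘ ξ)
    (X : C) : star (𝟙 X) (𝟙 (𝟙_ C)) = 𝟙 (X ⊗ 𝟙_ C) := by
  rw [hii₁, id_tensorHom_id]

theorem star_id_tensorUnit_id
    (hii₂ : ∀ {V U V' : C} (φ : V ⟶ U) (ξ : V' ⟶ 𝟙_ C), star ξ φ = ξ ⊗ₘ φ)
    (X : C) : star (𝟙 (𝟙_ C)) (𝟙 X) = 𝟙 (𝟙_ C ⊗ X) := by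
  rw [hii₂, id_tensorHom_id]

end StarProduct

/-- Given an associative operation `⊛` on Hom-spaces of a monoidal category `C`
satisfying (i) `φ ⊛ ψ = (id ⊛ id) ≫ (φ ⊗ ψ)`, (ii) compatibility with morphisms into the unit
object, and (iii) invertibility of `I_{U,V} := id_U ⊛ id_V`, the inverses `J_{U,V} := I_{U,V}⁻¹`
form a cocycle in `C`: they satisfy the 2-cocycle equation and the normalization conditions. -/
theorem stmt4 {C : Type*} [Category C] [MonoidalCategory C]
    (star : ∀ {V U V' U' : C}, (V ⟶ U) → (V' ⟶ U') → (V ⊗ V' ⟶ U ⊗ U'))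
    -- associativity of ⊛ (under the associativity constraint)
    (hassoc : ∀ {V U V' U' V'' U'' : C} (φ : V ⟶ U) (ψ : V' ⟶ U') (χ : V'' ⟶ U''),
      star (star φ ψ) χ ≫ (α_ U U' U'').hom = (α_ V V' V'').hom ≫ star φ (star ψ χ))
    -- (i)
    (hi : ∀ {V U V' U' : C} (φ : V ⟶ U) (ψ : V' ⟶ U'),
      star φ ψ = star (𝟙 V) (𝟙 V') ≫ (φ ⊗ₘ ψ))
    -- (ii)
    (hii₁ : ∀ {V U V' : C} (φ : V ⟶ U) (ξ : V' ⟶ 𝟙_ C), star φ ξ = φ ⊗ₘ ξ)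
    (hii₂ : ∀ {V U V' : C} (φ : V ⟶ U) (ξ : V' ⟶ 𝟙_ C), star ξ φ = ξ ⊗ₘ φ)
    -- (iii)
    (hinv : ∀ U V : C, IsIso (star (𝟙 U) (𝟙 V))) :
    -- conclusion: J := I⁻¹ is a cocycle
    (∀ X Y Z : C,
      haveI := hinv X Y; haveI := hinv (X ⊗ Y) Z
      haveI := hinv Y Z; haveI := hinv X (Y ⊗ Z)
      (inv (star (𝟙 X) (𝟙 Y)) ▷ Z) ≫ inv (star (𝟙 (X ⊗ Y)) (𝟙 Z)) ≫ (α_ X Y Z).hom =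
        (α_ X Y Z).hom ≫ (X ◁ inv (star (𝟙 Y) (𝟙 Z))) ≫ inv (star (𝟙 X) (𝟙 (Y ⊗ Z))))
    ∧ (∀ X : C,
        haveI := hinv X (𝟙_ C)
        inv (star (𝟙 X) (𝟙 (𝟙_ C))) = 𝟙 (X ⊗ 𝟙_ C))
    ∧ (∀ X : C,
        haveI := hinv (𝟙_ C) X
        inv (star (𝟙 (𝟙_ C)) (𝟙 X)) = 𝟙 (𝟙_ C ⊗ X)) := by
  refine ⟨fun X Y Z => ?_, fun X => ?_, fun X => ?_⟩
  · rw [← inv_whiskerRight, ← inv_whiskerLeft]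
    exact inv_comp_inv_comp_eq_of_comp_comp_eq (star_id_id_cocycle star hassoc hi X Y Z)
  · simp only [star_id_id_tensorUnit star hii₁, IsIso.inv_id]
  · simp only [star_id_tensorUnit_id star hii₂, IsIso.inv_id]
end

section
/- Let C be a monoidal category, M a left module category over C with associativity isomorphisms m_{X,Y,M}: (X ⊗ Y) ⊗̄ M → X ⊗̄ (Y ⊗̄ M), and J a dynamical twist for the extension M ⋉ C, i.e. a family of isomorphisms J_{X,Y,M}: (X ⊗ Y) ⊗̄ M → (X ⊗ Y) ⊗̄ M satisfying the dynamical cocycle and normalization conditions and commuting with morphisms of C. Then M with the same action bifunctor and modified associativity isomorphisms m̂_{X,Y,M} := m_{X,Y,M} ∘ J^{-1}_{X,Y,M} is again a module category over C (the pentagon-type axiom (1) and triangle axiom (2) of module categories hold for m̂). -/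
/-!
A dynamical twist `J` is an automorphism of each `(X ⊗ Y) ⊗̄ M` compatible with the action, so
`m̂ = m ∘ J⁻¹` is again natural. Inverting the dynamical cocycle condition expresses
`J⁻¹_{X⊗Y,Z} m J⁻¹_{X,Y} m⁻¹` through `J⁻¹_{X,Y⊗Z}`, `J⁻¹_{Y,Z}` and the associator; composing
with the pentagon for `m` gives the pentagon for `m̂`. The triangle for `m̂` is the triangle for
`m` together with the normalization `J_{X,1} = id` (after `r_X`).
-/

open CategoryTheory MonoidalCategory

/-- A left module category `(M, ⊗̄, m, l)` over a monoidal category `C`. -/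
structure ModCategory (C : Type*) [Category C] [MonoidalCategory C]
    (M : Type*) [Category M] where
  actObj : C → M → M
  actHom : ∀ {X Y : C} {M₁ M₂ : M}, (X ⟶ Y) → (M₁ ⟶ M₂) → (actObj X M₁ ⟶ actObj Y M₂)
  actHom_id : ∀ (X : C) (M₁ : M), actHom (𝟙 X) (𝟙 M₁) = 𝟙 (actObj X M₁)
  actHom_comp : ∀ {X Y Z : C} {M₁ M₂ M₃ : M} (f : X ⟶ Y) (g : Y ⟶ Z) (u : M₁ ⟶ M₂) (v : M₂ ⟶ M₃),
    actHom (f ≫ g) (u ≫ v) = actHom f u ≫ actHom g v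
  assocIso : ∀ (X Y : C) (M₁ : M), actObj (X ⊗ Y) M₁ ≅ actObj X (actObj Y M₁)
  assocIso_natural : ∀ {X X' Y Y' : C} {M₁ M₂ : M} (f : X ⟶ X') (g : Y ⟶ Y') (u : M₁ ⟶ M₂),
    actHom (f ⊗ₘ g) u ≫ (assocIso X' Y' M₂).hom = (assocIso X Y M₁).hom ≫ actHom f (actHom g u)
  unitIso : ∀ M₁ : M, actObj (𝟙_ C) M₁ ≅ M₁
  unitIso_natural : ∀ {M₁ M₂ : M} (u : M₁ ⟶ M₂),
    actHom (𝟙 (𝟙_ C)) u ≫ (unitIso M₂).hom = (unitIso M₁).hom ≫ u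
  pentagon : ∀ (X Y Z : C) (M₁ : M),
    (assocIso (X ⊗ Y) Z M₁).hom ≫ (assocIso X Y (actObj Z M₁)).hom =
      actHom (α_ X Y Z).hom (𝟙 M₁) ≫ (assocIso X (Y ⊗ Z) M₁).hom ≫
        actHom (𝟙 X) (assocIso Y Z M₁).hom
  triangle : ∀ (X : C) (M₁ : M),
    (assocIso X (𝟙_ C) M₁).hom ≫ actHom (𝟙 X) (unitIso M₁).hom = actHom (ρ_ X).hom (𝟙 M₁)

/-- A dynamical twist for the dynamical extension `M ⋉ C`: a family of isomorphisms
`J_{X,Y,M} : (X ⊗ Y) ⊗̄ M ≅ (X ⊗ Y) ⊗̄ M`, natural in `M`, satisfying the dynamical cocycle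
condition, the normalization conditions, and commuting with the morphisms of `C`. -/
structure DynamicalTwist {C : Type*} [Category C] [MonoidalCategory C]
    {M : Type*} [Category M] (ρ : ModCategory C M) where
  J : ∀ (X Y : C) (M₁ : M), ρ.actObj (X ⊗ Y) M₁ ≅ ρ.actObj (X ⊗ Y) M₁
  natural : ∀ (X Y : C) {M₁ M₂ : M} (u : M₁ ⟶ M₂),
    ρ.actHom (𝟙 (X ⊗ Y)) u ≫ (J X Y M₂).hom = (J X Y M₁).hom ≫ ρ.actHom (𝟙 (X ⊗ Y)) u
  cocycle : ∀ (X Y Z : C) (M₁ : M),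
    (ρ.assocIso (X ⊗ Y) Z M₁).hom ≫ (J X Y (ρ.actObj Z M₁)).hom ≫
        (ρ.assocIso (X ⊗ Y) Z M₁).inv ≫ (J (X ⊗ Y) Z M₁).hom ≫
        ρ.actHom (α_ X Y Z).hom (𝟙 M₁) =
      ρ.actHom (α_ X Y Z).hom (𝟙 M₁) ≫ (ρ.assocIso X (Y ⊗ Z) M₁).hom ≫
        ρ.actHom (𝟙 X) ((J Y Z M₁).hom) ≫ (ρ.assocIso X (Y ⊗ Z) M₁).inv ≫
        (J X (Y ⊗ Z) M₁).hom
  norm_right : ∀ (X : C) (M₁ : M),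
    (J X (𝟙_ C) M₁).hom ≫ ρ.actHom (ρ_ X).hom (𝟙 M₁) = ρ.actHom (ρ_ X).hom (𝟙 M₁)
  norm_left : ∀ (X : C) (M₁ : M),
    (J (𝟙_ C) X M₁).hom ≫ ρ.actHom (λ_ X).hom (𝟙 M₁) = ρ.actHom (λ_ X).hom (𝟙 M₁)
  commutes : ∀ {X Y Z W : C} (f : X ⟶ Z) (g : Y ⟶ W) (M₁ : M),
    ρ.actHom (f ⊗ₘ g) (𝟙 M₁) ≫ (J Z W M₁).hom = (J X Y M₁).hom ≫ ρ.actHom (f ⊗ₘ g) (𝟙 M₁)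

namespace ModCategory

variable {C : Type*} [Category C] [MonoidalCategory C] {M : Type*} [Category M]
  (ρ : ModCategory C M)

@[simps]
def actIso {X Y : C} {M₁ M₂ : M} (f : X ≅ Y) (u : M₁ ≅ M₂) :
    ρ.actObj X M₁ ≅ ρ.actObj Y M₂ where
  hom := ρ.actHom f.hom u.hom
  inv := ρ.actHom f.inv u.inv
  hom_inv_id := by rw [← ρ.actHom_comp, f.hom_inv_id, u.hom_inv_id, ρ.actHom_id]
  inv_hom_id := by rw [← ρ.actHom_comp, f.inv_hom_id, u.inv_hom_id, ρ.actHom_id]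

lemma actHom_id_comp (X : C) {M₁ M₂ M₃ : M} (u : M₁ ⟶ M₂) (v : M₂ ⟶ M₃) :
    ρ.actHom (𝟙 X) (u ≫ v) = ρ.actHom (𝟙 X) u ≫ ρ.actHom (𝟙 X) v := by
  simpa using ρ.actHom_comp (𝟙 X) (𝟙 X) u v

lemma actHom_inv_hom_id {X Y : C} (f : X ≅ Y) (M₁ : M) :
    ρ.actHom f.inv (𝟙 M₁) ≫ ρ.actHom f.hom (𝟙 M₁) = 𝟙 (ρ.actObj Y M₁) := by
  rw [← ρ.actHom_comp, f.inv_hom_id, Category.comp_id, ρ.actHom_id]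

lemma actHom_eq_comp_actHom_id {X Y : C} {M₁ M₂ : M} (f : X ⟶ Y) (u : M₁ ⟶ M₂) :
    ρ.actHom f u = ρ.actHom f (𝟙 M₁) ≫ ρ.actHom (𝟙 Y) u := by
  simpa using ρ.actHom_comp f (𝟙 Y) (𝟙 M₁) u

end ModCategory

namespace DynamicalTwist

variable {C : Type*} [Category C] [MonoidalCategory C] {M : Type*} [Category M]
  {ρ : ModCategory C M} (𝒥 : DynamicalTwist ρ)

lemma actHom_comp_J_inv {X Y Z W : C} {M₁ M₂ : M} (f : X ⟶ Z) (g : Y ⟶ W) (u : M₁ ⟶ M₂) :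
    ρ.actHom (f ⊗ₘ g) u ≫ (𝒥.J Z W M₂).inv = (𝒥.J X Y M₁).inv ≫ ρ.actHom (f ⊗ₘ g) u := by
  have hJ : ρ.actHom (f ⊗ₘ g) u ≫ (𝒥.J Z W M₂).hom = (𝒥.J X Y M₁).hom ≫ ρ.actHom (f ⊗ₘ g) u := by
    rw [ρ.actHom_eq_comp_actHom_id, Category.assoc, 𝒥.natural, reassoc_of% 𝒥.commutes]
  rw [Iso.comp_inv_eq, Category.assoc, hJ, Iso.inv_hom_id_assoc]

lemma cocycle_inv (X Y Z : C) (M₁ : M) :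
    (𝒥.J (X ⊗ Y) Z M₁).inv ≫ (ρ.assocIso (X ⊗ Y) Z M₁).hom ≫
        (𝒥.J X Y (ρ.actObj Z M₁)).inv ≫ (ρ.assocIso (X ⊗ Y) Z M₁).inv =
      ρ.actHom (α_ X Y Z).hom (𝟙 M₁) ≫ (𝒥.J X (Y ⊗ Z) M₁).inv ≫
        (ρ.assocIso X (Y ⊗ Z) M₁).hom ≫ ρ.actHom (𝟙 X) (𝒥.J Y Z M₁).inv ≫
        (ρ.assocIso X (Y ⊗ Z) M₁).inv ≫ ρ.actHom (α_ X Y Z).inv (𝟙 M₁) := by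
  let α := ρ.actIso (α_ X Y Z) (Iso.refl M₁)
  let K := ρ.actIso (Iso.refl X) (𝒥.J Y Z M₁)
  have cocycle : ρ.assocIso (X ⊗ Y) Z M₁ ≪≫ 𝒥.J X Y (ρ.actObj Z M₁) ≪≫
        (ρ.assocIso (X ⊗ Y) Z M₁).symm ≪≫ 𝒥.J (X ⊗ Y) Z M₁ ≪≫ α =
      α ≪≫ ρ.assocIso X (Y ⊗ Z) M₁ ≪≫ K ≪≫ (ρ.assocIso X (Y ⊗ Z) M₁).symm ≪≫
        𝒥.J X (Y ⊗ Z) M₁ := by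
    ext1
    simpa [α, K] using 𝒥.cocycle X Y Z M₁
  have h := congrArg Iso.inv cocycle
  simp only [Iso.trans_inv, Iso.symm_inv, Category.assoc] at h
  rw [Iso.inv_comp_eq] at h
  simpa [α, K] using h

def twistedAssocIso (X Y : C) (M₁ : M) : ρ.actObj (X ⊗ Y) M₁ ≅ ρ.actObj X (ρ.actObj Y M₁) :=
  (𝒥.J X Y M₁).symm ≪≫ ρ.assocIso X Y M₁

lemma twistedAssocIso_natural {X X' Y Y' : C} {M₁ M₂ : M} (f : X ⟶ X') (g : Y ⟶ Y')
    (u : M₁ ⟶ M₂) :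
    ρ.actHom (f ⊗ₘ g) u ≫ (𝒥.twistedAssocIso X' Y' M₂).hom =
      (𝒥.twistedAssocIso X Y M₁).hom ≫ ρ.actHom f (ρ.actHom g u) := by
  simp only [twistedAssocIso, Iso.trans_hom, Iso.symm_hom, Category.assoc]
  rw [reassoc_of% 𝒥.actHom_comp_J_inv, ρ.assocIso_natural]

lemma twistedAssocIso_pentagon (X Y Z : C) (M₁ : M) :
    (𝒥.twistedAssocIso (X ⊗ Y) Z M₁).hom ≫ (𝒥.twistedAssocIso X Y (ρ.actObj Z M₁)).hom =
      ρ.actHom (α_ X Y Z).hom (𝟙 M₁) ≫ (𝒥.twistedAssocIso X (Y ⊗ Z) M₁).hom ≫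
        ρ.actHom (𝟙 X) (𝒥.twistedAssocIso Y Z M₁).hom := by
  simp only [twistedAssocIso, Iso.trans_hom, Iso.symm_hom, Category.assoc,
    ρ.actHom_id_comp]
  -- insert `m⁻¹ m` to expose the left-hand side of `cocycle_inv`, then use the pentagon for `m`
  calc _ = ((𝒥.J (X ⊗ Y) Z M₁).inv ≫ (ρ.assocIso (X ⊗ Y) Z M₁).hom ≫
          (𝒥.J X Y (ρ.actObj Z M₁)).inv ≫ (ρ.assocIso (X ⊗ Y) Z M₁).inv) ≫
        (ρ.assocIso (X ⊗ Y) Z M₁).hom ≫ (ρ.assocIso X Y (ρ.actObj Z M₁)).hom := by simp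
    _ = _ := by
      rw [𝒥.cocycle_inv, ρ.pentagon]
      simp only [Category.assoc, reassoc_of% (ρ.actHom_inv_hom_id (α_ X Y Z) M₁),
        Iso.inv_hom_id_assoc]

lemma twistedAssocIso_triangle (X : C) (M₁ : M) :
    (𝒥.twistedAssocIso X (𝟙_ C) M₁).hom ≫ ρ.actHom (𝟙 X) (ρ.unitIso M₁).hom =
      ρ.actHom (ρ_ X).hom (𝟙 M₁) := by
  rw [twistedAssocIso, Iso.trans_hom, Category.assoc, ρ.triangle, Iso.symm_hom,
    Iso.inv_comp_eq, 𝒥.norm_right]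

def twist : ModCategory C M where
  actObj := ρ.actObj
  actHom := ρ.actHom
  actHom_id := ρ.actHom_id
  actHom_comp := ρ.actHom_comp
  assocIso := 𝒥.twistedAssocIso
  assocIso_natural := 𝒥.twistedAssocIso_natural
  unitIso := ρ.unitIso
  unitIso_natural := ρ.unitIso_natural
  pentagon := 𝒥.twistedAssocIso_pentagon
  triangle := 𝒥.twistedAssocIso_triangle

end DynamicalTwist

/-- if `J` is a dynamical twist for `M ⋉ C`, then `M` with the same action and
the modified associativity isomorphisms `m̂_{X,Y,M} := m_{X,Y,M} ∘ J⁻¹_{X,Y,M}` is again a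
module category over `C`: the pentagon-type axiom and the triangle axiom hold for `m̂`. -/
theorem stmt8 {C : Type*} [Category C] [MonoidalCategory C] {M : Type*} [Category M]
    (ρ : ModCategory C M) (𝒥 : DynamicalTwist ρ) :
    (∀ (X Y Z : C) (M₁ : M),
      ((𝒥.J (X ⊗ Y) Z M₁).inv ≫ (ρ.assocIso (X ⊗ Y) Z M₁).hom) ≫
          ((𝒥.J X Y (ρ.actObj Z M₁)).inv ≫ (ρ.assocIso X Y (ρ.actObj Z M₁)).hom) =
        ρ.actHom (α_ X Y Z).hom (𝟙 M₁) ≫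
          ((𝒥.J X (Y ⊗ Z) M₁).inv ≫ (ρ.assocIso X (Y ⊗ Z) M₁).hom) ≫
          ρ.actHom (𝟙 X) ((𝒥.J Y Z M₁).inv ≫ (ρ.assocIso Y Z M₁).hom))
    ∧ (∀ (X : C) (M₁ : M),
      ((𝒥.J X (𝟙_ C) M₁).inv ≫ (ρ.assocIso X (𝟙_ C) M₁).hom) ≫
          ρ.actHom (𝟙 X) (ρ.unitIso M₁).hom = ρ.actHom (ρ_ X).hom (𝟙 M₁)) :=
  ⟨𝒥.twist.pentagon, 𝒥.twist.triangle⟩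
end
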